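/- arXiv:1208.1348 — 2 statements merged into one kernel-verified Lean document; each statement's English description precedes it below -/
import Mathlib

section
/- Let μ be a Lévy measure on ℝ, ψ^L(ξ) = ∫_{|ξu|<1} (ξu)² μ(du) and ψ^U(ξ) = ∫ min((ξu)²,1) μ(du). Then for any 0 < ξ₁ < ξ₂: ψ^U(ξ₂) − ψ^U(ξ₁) = ∫_{ξ₁}^{ξ₂} (2/η)·ψ^L(η) dη. -/
/-!
For fixed `u`, the function `η ↦ min ((ηu)², 1)` has right derivative `(2/η) (ηu)² 𝟙{|ηu| < 1}`
at every `η ≥ 0`, so the fundamental theorem of calculus gives the identity for each `u`, and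
Tonelli's theorem integrates it against `μ`. Tonelli needs s-finiteness: `μ` restricted to
`{u ≠ 0}` is σ-finite because `∫ min (1, u²) dμ < ∞`, and the point `u = 0` contributes nothing
to either `ψ^U` or `ψ^L`.
-/

open MeasureTheory Real Set

/-- A Lévy measure on `ℝ`: a Borel measure with `∫ min(1, u²) μ(du) < ∞`. -/
def IsLevyMeasure (μ : Measure ℝ) : Prop :=
  ∫⁻ u, ENNReal.ofReal (min 1 (u ^ 2)) ∂μ < ⊤

/-- `ψ^L(ξ) = ∫_{|ξu|<1} (ξu)² μ(du)`. -/
noncomputable def psiL (μ : Measure ℝ) (ξ : ℝ) : ℝ :=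
  (∫⁻ u in {u : ℝ | |ξ * u| < 1}, ENNReal.ofReal ((ξ * u) ^ 2) ∂μ).toReal

/-- `ψ^U(ξ) = ∫ min((ξu)², 1) μ(du)`. -/
noncomputable def psiU (μ : Measure ℝ) (ξ : ℝ) : ℝ :=
  (∫⁻ u, ENNReal.ofReal (min ((ξ * u) ^ 2) 1) ∂μ).toReal

/-- `Re ψ(ξ) = ∫ (1 - cos(ξu)) μ(du)`. -/
noncomputable def rePsi (μ : Measure ℝ) (ξ : ℝ) : ℝ :=
  (∫⁻ u, ENNReal.ofReal (1 - Real.cos (ξ * u)) ∂μ).toReal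

/-- `ρ_t = inf{ξ > 0 : Re ψ(ξ) ≥ 1/t}`. -/
noncomputable def rho (μ : Measure ℝ) (t : ℝ) : ℝ :=
  sInf {ξ : ℝ | 0 < ξ ∧ 1 / t ≤ rePsi μ ξ}

open Filter Topology
open scoped ENNReal

theorem sigmaFinite_restrict_support {α : Type*} [MeasurableSpace α] {μ : Measure α}
    {f : α → ℝ≥0∞} (hf : Measurable f) (hfi : ∫⁻ x, f x ∂μ ≠ ∞) :
    SigmaFinite (μ.restrict (Function.support f)) := by
  refine ⟨⟨⟨fun n => {x | f x = 0 ∨ 2⁻¹ ^ n < f x}, fun _ => trivial, fun n => ?_, ?_⟩⟩⟩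
  · have hn : (2⁻¹ : ℝ≥0∞) ^ n ≠ 0 := by simp
    rw [Measure.restrict_apply' (measurableSet_support hf)]
    calc μ ({x | f x = 0 ∨ 2⁻¹ ^ n < f x} ∩ Function.support f)
        ≤ μ {x | 2⁻¹ ^ n ≤ f x} := measure_mono fun x ⟨hx, hx0⟩ => (hx.resolve_left hx0).le
      _ ≤ (∫⁻ x, f x ∂μ) / 2⁻¹ ^ n := meas_ge_le_lintegral_div hf.aemeasurable hn (by simp)
      _ < ∞ := ENNReal.div_lt_top hfi hn
  · refine eq_univ_of_forall fun x => mem_iUnion.2 ?_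
    by_cases hx : f x = 0
    · exact ⟨0, Or.inl hx⟩
    · obtain ⟨n, hn⟩ := ENNReal.exists_inv_two_pow_lt hx
      exact ⟨n, Or.inr hn⟩

theorem lintegral_restrict_compl_singleton {α : Type*} [MeasurableSpace α] {μ : Measure α}
    {f : α → ℝ≥0∞} {a : α} (hf : f a = 0) : ∫⁻ x in {a}ᶜ, f x ∂μ = ∫⁻ x, f x ∂μ :=
  setLIntegral_eq_of_support_subset <| Function.support_subset_iff'.2 fun x hx => by
    rwa [notMem_compl_iff.1 hx]

lemma min_mul_sq_one_le (ξ u : ℝ) : min ((ξ * u) ^ 2) 1 ≤ max (ξ ^ 2) 1 * min 1 (u ^ 2) := by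
  rcases le_total (u ^ 2) 1 with h | h
  · rw [min_eq_right h, mul_pow]
    exact (min_le_left _ _).trans (by gcongr; exact le_max_left _ _)
  · rw [min_eq_left h, mul_one]
    exact (min_le_right _ _).trans (le_max_right _ _)

lemma min_mul_sq_one_mono (u : ℝ) {ξ₁ ξ₂ : ℝ} (h₁ : 0 ≤ ξ₁) (h₁₂ : ξ₁ ≤ ξ₂) :
    min ((ξ₁ * u) ^ 2) 1 ≤ min ((ξ₂ * u) ^ 2) 1 := by
  rw [mul_pow, mul_pow]
  gcongr

namespace IsLevyMeasure

variable {μ : Measure ℝ}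

theorem restrict (hμ : IsLevyMeasure μ) (s : Set ℝ) : IsLevyMeasure (μ.restrict s) :=
  (setLIntegral_le_lintegral s _).trans_lt hμ

theorem sigmaFinite_restrict_compl_zero (hμ : IsLevyMeasure μ) :
    SigmaFinite (μ.restrict {0}ᶜ) := by
  have hsupp : Function.support (fun u : ℝ => ENNReal.ofReal (min 1 (u ^ 2))) = {0}ᶜ := by
    ext u
    simp
  rw [← hsupp]
  exact sigmaFinite_restrict_support (by fun_prop) hμ.ne

theorem lintegral_min_mul_sq_one_ne_top (hμ : IsLevyMeasure μ) (ξ : ℝ) :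
    ∫⁻ u, ENNReal.ofReal (min ((ξ * u) ^ 2) 1) ∂μ ≠ ∞ := by
  refine ne_top_of_le_ne_top
    (ENNReal.mul_ne_top (ENNReal.ofReal_ne_top (r := max (ξ ^ 2) 1)) hμ.ne) ?_
  rw [← lintegral_const_mul _ (by fun_prop)]
  refine lintegral_mono fun u => ?_
  rw [← ENNReal.ofReal_mul (by positivity)]
  exact ENNReal.ofReal_le_ofReal (min_mul_sq_one_le ξ u)

end IsLevyMeasure

lemma psiU_restrict_compl_zero (μ : Measure ℝ) (ξ : ℝ) :
    psiU (μ.restrict {0}ᶜ) ξ = psiU μ ξ := by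
  rw [psiU, psiU, lintegral_restrict_compl_singleton (by simp)]

lemma psiL_restrict_compl_zero (μ : Measure ℝ) (η : ℝ) :
    psiL (μ.restrict {0}ᶜ) η = psiL μ η := by
  rw [psiL, psiL, Measure.restrict_comm (measurableSet_lt (by fun_prop) measurable_const),
    lintegral_restrict_compl_singleton (by simp)]

noncomputable def truncSqDeriv (u η : ℝ) : ℝ :=
  {η : ℝ | |η * u| < 1}.indicator (fun η => 2 * η * u ^ 2) η

lemma truncSqDeriv_of_abs_lt {u η : ℝ} (h : |η * u| < 1) : truncSqDeriv u η = 2 * η * u ^ 2 :=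
  indicator_of_mem (s := {η : ℝ | |η * u| < 1}) h _

lemma truncSqDeriv_of_not_abs_lt {u η : ℝ} (h : ¬|η * u| < 1) : truncSqDeriv u η = 0 :=
  indicator_of_notMem (s := {η : ℝ | |η * u| < 1}) h _

lemma truncSqDeriv_nonneg (u : ℝ) {η : ℝ} (hη : 0 ≤ η) : 0 ≤ truncSqDeriv u η :=
  indicator_apply_nonneg fun _ => by positivity

lemma measurable_truncSqDeriv : Measurable fun p : ℝ × ℝ => truncSqDeriv p.1 p.2 :=
  show Measurable ({p : ℝ × ℝ | |p.2 * p.1| < 1}.indicator fun p => 2 * p.2 * p.1 ^ 2) from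
    (by fun_prop : Measurable fun p : ℝ × ℝ => 2 * p.2 * p.1 ^ 2).indicator
      (measurableSet_lt (by fun_prop) measurable_const)

lemma intervalIntegrable_truncSqDeriv (u a b : ℝ) :
    IntervalIntegrable (truncSqDeriv u) volume a b := by
  rw [intervalIntegrable_iff]
  exact (by fun_prop : Continuous fun η : ℝ => 2 * η * u ^ 2).integrableOn_uIoc.indicator
    (measurableSet_lt (by fun_prop) measurable_const)

lemma hasDerivWithinAt_min_mul_sq_one (u : ℝ) {η : ℝ} (hη : 0 ≤ η) :
    HasDerivWithinAt (fun η => min ((η * u) ^ 2) 1) (truncSqDeriv u η) (Ioi η) η := by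
  by_cases h : |η * u| < 1
  · have hopen : IsOpen {η : ℝ | |η * u| < 1} := isOpen_lt (by fun_prop) continuous_const
    have hsq : (fun η => min ((η * u) ^ 2) 1) =ᶠ[𝓝 η] fun η => (η * u) ^ 2 :=
      eventually_of_mem (hopen.mem_nhds h) fun η' h' =>
        min_eq_left (sq_le_one_iff_abs_le_one _ |>.2 (le_of_lt h'))
    have hderiv : HasDerivAt (fun η => (η * u) ^ 2) (2 * η * u ^ 2) η :=
      (((hasDerivAt_id η).mul_const u).fun_pow 2).congr_deriv (by simp; ring)
    rw [truncSqDeriv_of_abs_lt h]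
    exact (hderiv.congr_of_eventuallyEq hsq).hasDerivWithinAt
  · rw [truncSqDeriv_of_not_abs_lt h]
    refine (hasDerivWithinAt_const η _ 1).congr (fun η' hη' => min_eq_right ?_) (min_eq_right ?_)
    all_goals rw [one_le_sq_iff_one_le_abs]
    · rw [abs_mul, abs_of_pos (hη.trans_lt hη')]
      rw [not_lt, abs_mul, abs_of_nonneg hη] at h
      exact h.trans (by gcongr; exact hη'.le)
    · exact not_lt.1 h

theorem integral_truncSqDeriv (u : ℝ) {ξ₁ ξ₂ : ℝ} (h₁ : 0 ≤ ξ₁) (h₁₂ : ξ₁ ≤ ξ₂) :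
    ∫ η in ξ₁..ξ₂, truncSqDeriv u η = min ((ξ₂ * u) ^ 2) 1 - min ((ξ₁ * u) ^ 2) 1 :=
  intervalIntegral.integral_eq_sub_of_hasDeriv_right_of_le h₁₂ (by fun_prop)
    (fun _ hη => hasDerivWithinAt_min_mul_sq_one u (h₁.trans hη.1.le))
    (intervalIntegrable_truncSqDeriv u ξ₁ ξ₂)

theorem lintegral_Ioc_truncSqDeriv (u : ℝ) {ξ₁ ξ₂ : ℝ} (h₁ : 0 ≤ ξ₁) (h₁₂ : ξ₁ ≤ ξ₂) :
    ∫⁻ η in Ioc ξ₁ ξ₂, ENNReal.ofReal (truncSqDeriv u η) =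
      ENNReal.ofReal (min ((ξ₂ * u) ^ 2) 1) - ENNReal.ofReal (min ((ξ₁ * u) ^ 2) 1) := by
  have hint := intervalIntegrable_truncSqDeriv u ξ₁ ξ₂
  rw [intervalIntegrable_iff_integrableOn_Ioc_of_le h₁₂] at hint
  have hnonneg : 0 ≤ᵐ[volume.restrict (Ioc ξ₁ ξ₂)] truncSqDeriv u :=
    ae_restrict_of_forall_mem measurableSet_Ioc fun η hη =>
      truncSqDeriv_nonneg u (h₁.trans hη.1.le)
  rw [← ofReal_integral_eq_lintegral_ofReal hint hnonneg, ← intervalIntegral.integral_of_le h₁₂,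
    integral_truncSqDeriv u h₁ h₁₂, ENNReal.ofReal_sub _ (by positivity)]

theorem lintegral_truncSqDeriv (ν : Measure ℝ) {η : ℝ} (hη : 0 < η) :
    ∫⁻ u, ENNReal.ofReal (truncSqDeriv u η) ∂ν =
      ENNReal.ofReal (2 / η) * ∫⁻ u in {u : ℝ | |η * u| < 1}, ENNReal.ofReal ((η * u) ^ 2) ∂ν := by
  have hA : MeasurableSet {u : ℝ | |η * u| < 1} := measurableSet_lt (by fun_prop) measurable_const
  rw [← lintegral_indicator hA, ← lintegral_const_mul _ (Measurable.indicator (by fun_prop) hA)]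
  refine lintegral_congr fun u => ?_
  by_cases h : |η * u| < 1
  · rw [truncSqDeriv_of_abs_lt h, indicator_of_mem (s := {u : ℝ | |η * u| < 1}) h,
      ← ENNReal.ofReal_mul (by positivity)]
    congr 1
    field_simp
  · rw [truncSqDeriv_of_not_abs_lt h, indicator_of_notMem (s := {u : ℝ | |η * u| < 1}) h,
      mul_zero, ENNReal.ofReal_zero]

theorem lintegral_Ioc_lintegral_truncSqDeriv (ν : Measure ℝ) [SFinite ν] {ξ₁ ξ₂ : ℝ}
    (h₁ : 0 ≤ ξ₁) (h₁₂ : ξ₁ ≤ ξ₂) :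
    ∫⁻ η in Ioc ξ₁ ξ₂, ∫⁻ u, ENNReal.ofReal (truncSqDeriv u η) ∂ν =
      ∫⁻ u, (ENNReal.ofReal (min ((ξ₂ * u) ^ 2) 1) -
        ENNReal.ofReal (min ((ξ₁ * u) ^ 2) 1)) ∂ν := by
  rw [← lintegral_lintegral_swap measurable_truncSqDeriv.ennreal_ofReal.aemeasurable]
  exact lintegral_congr fun u => lintegral_Ioc_truncSqDeriv u h₁ h₁₂

theorem psiU_sub_eq_integral_psiL_of_sFinite {ν : Measure ℝ} [SFinite ν] (hν : IsLevyMeasure ν)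
    {ξ₁ ξ₂ : ℝ} (h₁ : 0 ≤ ξ₁) (h₁₂ : ξ₁ ≤ ξ₂) :
    psiU ν ξ₂ - psiU ν ξ₁ = ∫ η in ξ₁..ξ₂, (2 / η) * psiL ν η := by
  set K : ℝ → ℝ≥0∞ := fun η => ∫⁻ u, ENNReal.ofReal (truncSqDeriv u η) ∂ν
  have hK : Measurable K := measurable_truncSqDeriv.ennreal_ofReal.lintegral_prod_left'
  have hmono : ∀ u,
      ENNReal.ofReal (min ((ξ₁ * u) ^ 2) 1) ≤ ENNReal.ofReal (min ((ξ₂ * u) ^ 2) 1) :=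
    fun u => ENNReal.ofReal_le_ofReal (min_mul_sq_one_mono u h₁ h₁₂)
  have hdiff : ∫⁻ η in Ioc ξ₁ ξ₂, K η =
      ∫⁻ u, ENNReal.ofReal (min ((ξ₂ * u) ^ 2) 1) ∂ν -
        ∫⁻ u, ENNReal.ofReal (min ((ξ₁ * u) ^ 2) 1) ∂ν := by
    rw [lintegral_Ioc_lintegral_truncSqDeriv ν h₁ h₁₂,
      lintegral_sub (by fun_prop) (hν.lintegral_min_mul_sq_one_ne_top ξ₁) (ae_of_all _ hmono)]
  have hK_fin : ∫⁻ η in Ioc ξ₁ ξ₂, K η ≠ ∞ :=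
    hdiff ▸ (tsub_le_self.trans_lt (hν.lintegral_min_mul_sq_one_ne_top ξ₂).lt_top).ne
  calc psiU ν ξ₂ - psiU ν ξ₁ = (∫⁻ η in Ioc ξ₁ ξ₂, K η).toReal := by
        rw [hdiff, ENNReal.toReal_sub_of_le (lintegral_mono hmono)
          (hν.lintegral_min_mul_sq_one_ne_top ξ₂), psiU, psiU]
    _ = ∫ η in Ioc ξ₁ ξ₂, (K η).toReal :=
        (integral_toReal hK.aemeasurable (ae_lt_top hK hK_fin)).symm
    _ = ∫ η in ξ₁..ξ₂, (2 / η) * psiL ν η := by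
        rw [intervalIntegral.integral_of_le h₁₂]
        refine setIntegral_congr_fun measurableSet_Ioc fun η hη => ?_
        have hη : 0 < η := h₁.trans_lt hη.1
        rw [show K η = _ from lintegral_truncSqDeriv ν hη, ENNReal.toReal_mul,
          ENNReal.toReal_ofReal (by positivity), psiL]

theorem psiU_sub_eq_integral_psiL (μ : Measure ℝ) (hμ : IsLevyMeasure μ)
    (ξ₁ ξ₂ : ℝ) (h₁ : 0 < ξ₁) (h₂ : ξ₁ < ξ₂) :
    psiU μ ξ₂ - psiU μ ξ₁ = ∫ η in ξ₁..ξ₂, (2 / η) * psiL μ η := by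
  have := hμ.sigmaFinite_restrict_compl_zero
  simpa only [psiU_restrict_compl_zero, psiL_restrict_compl_zero] using
    psiU_sub_eq_integral_psiL_of_sFinite (hμ.restrict {0}ᶜ) h₁.le h₂.le
end

section
/- Let μ be a Lévy measure with μ(ℝ)=∞ satisfying condition A with β > 1. For k ≥ 0 and λ > 0 set I_k(t,λ) = ∫_ℝ |y|^k e^{−λ t ψ^U(y)} dy. Then there exists c = c(k,λ) > 0 such that I_k(t,λ) ≤ c·ρ_t^{k+1} for all t ∈ (0,1], where ρ_t = inf{ξ>0 : Re ψ(ξ) ≥ 1/t}. -/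
open MeasureTheory Real Set

/-!
Condition A turns the pointwise inequality `ψ^U(ξ) + (3/4) ψ^L(2ξ) ≤ ψ^U(2ξ)` into the
doubling bound `γ ψ^U(ξ) ≤ ψ^U(2ξ)` with `γ = 4β/(4β - 3) > 1`; iterating it gives the power
growth `r^α ψ^U(ξ) ≤ γ ψ^U(rξ)` for `r ≥ 1`, where `α = log₂ γ`. If `ξ > 0` satisfies
`Re ψ(ξ) ≥ 1/t`, then `ψ^U(ξ) ≥ 1/(2t)`, so the integrand of `I_k(t, λ)` is dominated by a
multiple of `|y|^k exp(-c |y/ξ|^α)`, whose integral scales like `ξ^(k+1)`; letting `ξ` decrease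
to `ρ_t` gives the bound.

The set defining `ρ_t` is nonempty as soon as `μ {u ≠ 0} = ∞`: then `ψ^U` is unbounded, and by
condition A so is `Re ψ ≥ (2/π²) ψ^L`. If `μ {u ≠ 0} < ∞`, then `ψ^U` is bounded, the integrand
is not integrable, and the Bochner integral is `0` by convention.
-/

open Filter
open scoped Topology

lemma one_sub_cos_le_two_mul_min_sq_one (x : ℝ) : 1 - cos x ≤ 2 * min (x ^ 2) 1 := by
  rcases le_total (x ^ 2) 1 with h | h
  · rw [min_eq_left h]
    linarith [one_sub_sq_div_two_le_cos (x := x), sq_nonneg x]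
  · rw [min_eq_right h]
    linarith [neg_one_le_cos x]

lemma rpow_logb_mul_le_of_doubling {f : ℝ → ℝ} {γ x r : ℝ} (hγ : 1 ≤ γ)
    (hmono : MonotoneOn f (Ici 0)) (hdoub : ∀ x, 0 ≤ x → γ * f x ≤ f (2 * x))
    (hx : 0 ≤ x) (hfx : 0 ≤ f x) (hr : 1 ≤ r) :
    r ^ logb 2 γ * f x ≤ γ * f (r * x) := by
  have hiter : ∀ n : ℕ, γ ^ n * f x ≤ f (2 ^ n * x) := by
    intro n
    induction n with
    | zero => simp
    | succ n ih =>
      calc γ ^ (n + 1) * f x = γ * (γ ^ n * f x) := by ring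
        _ ≤ γ * f (2 ^ n * x) := by gcongr
        _ ≤ f (2 * (2 ^ n * x)) := hdoub _ (by positivity)
        _ = f (2 ^ (n + 1) * x) := by ring_nf
  set n := ⌊logb 2 r⌋₊
  have hr0 : 0 < r := by linarith
  have hlog : 0 ≤ logb 2 r := logb_nonneg one_lt_two hr
  have h2n : (2 : ℝ) ^ n ≤ r := by
    rw [← rpow_natCast, ← le_logb_iff_rpow_le one_lt_two hr0]
    exact Nat.floor_le hlog
  have hswap : r ^ logb 2 γ = γ ^ logb 2 r := by
    conv_lhs => rw [← rpow_logb two_pos (by norm_num) hr0]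
    rw [← rpow_mul two_pos.le, mul_comm, rpow_mul two_pos.le,
      rpow_logb two_pos (by norm_num) (by linarith)]
  have hpow : γ ^ logb 2 r ≤ γ ^ (n + 1) := by
    rw [← rpow_natCast]
    exact rpow_le_rpow_of_exponent_le hγ (by push_cast; exact (Nat.lt_floor_add_one _).le)
  calc r ^ logb 2 γ * f x ≤ γ ^ (n + 1) * f x := by rw [hswap]; gcongr
    _ = γ * (γ ^ n * f x) := by ring
    _ ≤ γ * f (2 ^ n * x) := mul_le_mul_of_nonneg_left (hiter n) (by linarith)
    _ ≤ γ * f (r * x) := by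
      refine mul_le_mul_of_nonneg_left (hmono ?_ ?_ (by gcongr)) (by linarith) <;>
        exact mem_Ici.2 (by positivity)

lemma le_apply_csInf {α β : Type*} [ConditionallyCompleteLinearOrder α] [TopologicalSpace α]
    [OrderTopology α] [LinearOrder β] [TopologicalSpace β] [OrderClosedTopology β]
    {S : Set α} {f : α → β} {b : β} (hf : Continuous f) (hne : S.Nonempty) (hbdd : BddBelow S)
    (h : ∀ x ∈ S, b ≤ f x) : b ≤ f (sInf S) :=
  closure_minimal h (isClosed_le continuous_const hf) (csInf_mem_closure hne hbdd)

lemma integrable_comp_abs {f : ℝ → ℝ} (hf : IntegrableOn f (Ioi 0)) :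
    Integrable fun x => f |x| := by
  have hf' : IntegrableOn (fun x => f |x|) (Ioi 0) :=
    hf.congr_fun (fun x hx => by rw [abs_of_pos (mem_Ioi.1 hx)]) measurableSet_Ioi
  rw [← integrableOn_univ, ← Iic_union_Ioi (a := (0 : ℝ)), integrableOn_union]
  refine ⟨?_, hf'⟩
  have hneg : MeasurableEmbedding fun x : ℝ => -x := (Homeomorph.neg ℝ).measurableEmbedding
  rw [← Measure.map_neg_eq_self (volume : Measure ℝ), hneg.integrableOn_map_iff]
  simp_rw [Function.comp_def, abs_neg, neg_preimage, neg_Iic, neg_zero]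
  exact (integrableOn_Ici_iff_integrableOn_Ioi).mpr hf'

lemma integrable_pow_abs_mul_exp_neg_mul_rpow_abs (k : ℕ) {c α : ℝ} (hc : 0 < c) (hα : 0 < α) :
    Integrable fun s : ℝ => |s| ^ k * exp (-c * |s| ^ α) := by
  refine integrable_comp_abs (f := fun x => x ^ k * exp (-c * x ^ α)) ?_
  have hk : (-1 : ℝ) < k := neg_one_lt_zero.trans_le k.cast_nonneg
  refine (integrableOn_rpow_mul_exp_neg_mul_rpow hk hα hc).congr_fun (fun x _ => ?_)
    measurableSet_Ioi
  simp only [rpow_natCast]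

lemma not_integrable_of_pos_le {f : ℝ → ℝ} {c : ℝ} (hc : 0 < c) (hf : ∀ y, 1 < y → c ≤ f y) :
    ¬ Integrable f := by
  intro hint
  have hconst : IntegrableOn (fun _ : ℝ => c) (Ioi 1) :=
    hint.integrableOn.mono' aestronglyMeasurable_const <|
      (ae_restrict_iff' measurableSet_Ioi).2 <| .of_forall fun y hy => by
        rw [norm_of_nonneg hc.le]; exact hf y hy
  rw [integrableOn_const_iff] at hconst
  simp [hc.ne'] at hconst

lemma integral_pow_abs_mul_exp_neg_le {f : ℝ → ℝ} (k : ℕ) {c α ξ : ℝ} (hc : 0 < c)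
    (hα : 0 < α) (hξ : 0 < ξ) (hf : ∀ y, c * |y / ξ| ^ α - c ≤ f y) :
    ∫ y, |y| ^ k * exp (-f y) ≤
      exp c * (∫ s, |s| ^ k * exp (-c * |s| ^ α)) * ξ ^ (k + 1) := by
  set h : ℝ → ℝ := fun s => |s| ^ k * exp (-c * |s| ^ α)
  have hmajor : ∀ y, |y| ^ k * exp (-f y) ≤ exp c * ξ ^ k * h (y / ξ) := by
    intro y
    have hy : exp c * ξ ^ k * h (y / ξ) = |y| ^ k * exp (c - c * |y / ξ| ^ α) := by
      simp only [h, abs_div, abs_of_pos hξ, div_pow, exp_sub, neg_mul, exp_neg]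
      field_simp
    rw [hy]
    gcongr
    linarith [hf y]
  calc ∫ y, |y| ^ k * exp (-f y) ≤ ∫ y, exp c * ξ ^ k * h (y / ξ) :=
        integral_mono_of_nonneg (.of_forall fun y => by positivity)
          (((integrable_pow_abs_mul_exp_neg_mul_rpow_abs k hc hα).comp_div hξ.ne').const_mul _)
          (.of_forall hmajor)
    _ = exp c * (∫ s, h s) * ξ ^ (k + 1) := by
        rw [integral_const_mul, Measure.integral_comp_div, abs_of_pos hξ, smul_eq_mul]
        ring

section LevySymbols

variable {μ : Measure ℝ}

lemma lintegral_min_sq_one_lt_top (hμ : IsLevyMeasure μ) (ξ : ℝ) :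
    ∫⁻ u, ENNReal.ofReal (min ((ξ * u) ^ 2) 1) ∂μ < ⊤ := by
  have hpt : ∀ u : ℝ, min ((ξ * u) ^ 2) 1 ≤ (1 + ξ ^ 2) * min 1 (u ^ 2) := by
    intro u
    rcases le_total (u ^ 2) 1 with h | h
    · rw [min_eq_right h]
      nlinarith [min_le_left ((ξ * u) ^ 2) 1, sq_nonneg u]
    · rw [min_eq_left h]
      nlinarith [min_le_right ((ξ * u) ^ 2) 1, sq_nonneg ξ]
  calc ∫⁻ u, ENNReal.ofReal (min ((ξ * u) ^ 2) 1) ∂μ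
      ≤ ∫⁻ u, ENNReal.ofReal (1 + ξ ^ 2) * ENNReal.ofReal (min 1 (u ^ 2)) ∂μ :=
        lintegral_mono fun u => by
          rw [← ENNReal.ofReal_mul (by positivity)]; exact ENNReal.ofReal_le_ofReal (hpt u)
    _ = ENNReal.ofReal (1 + ξ ^ 2) * ∫⁻ u, ENNReal.ofReal (min 1 (u ^ 2)) ∂μ :=
        lintegral_const_mul _ (by fun_prop)
    _ < ⊤ := ENNReal.mul_lt_top ENNReal.ofReal_lt_top hμ

lemma ofReal_psiU (hμ : IsLevyMeasure μ) (ξ : ℝ) :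
    ENNReal.ofReal (psiU μ ξ) = ∫⁻ u, ENNReal.ofReal (min ((ξ * u) ^ 2) 1) ∂μ :=
  ENNReal.ofReal_toReal (lintegral_min_sq_one_lt_top hμ ξ).ne

lemma psiU_nonneg (ξ : ℝ) : 0 ≤ psiU μ ξ := ENNReal.toReal_nonneg

lemma psiL_nonneg (ξ : ℝ) : 0 ≤ psiL μ ξ := ENNReal.toReal_nonneg

lemma psiU_mono (hμ : IsLevyMeasure μ) {ξ₁ ξ₂ : ℝ} (h : |ξ₁| ≤ |ξ₂|) :
    psiU μ ξ₁ ≤ psiU μ ξ₂ := by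
  refine ENNReal.toReal_mono (lintegral_min_sq_one_lt_top hμ ξ₂).ne <|
    lintegral_mono fun u => ENNReal.ofReal_le_ofReal <| min_le_min_right 1 ?_
  rw [mul_pow, mul_pow]
  exact mul_le_mul_of_nonneg_right (sq_le_sq.2 h) (sq_nonneg u)

lemma psiU_le_toReal_measure_ne_zero (hfin : μ {u | u ≠ 0} ≠ ⊤) (ξ : ℝ) :
    psiU μ ξ ≤ (μ {u | u ≠ 0}).toReal := by
  refine ENNReal.toReal_mono hfin ?_
  rw [← lintegral_indicator_one (s := {u : ℝ | u ≠ 0}) (measurableSet_singleton 0).compl]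
  refine lintegral_mono fun u => ?_
  rcases eq_or_ne u 0 with rfl | hu
  · simp
  · rw [indicator_of_mem hu, Pi.one_apply, ENNReal.ofReal_le_one]
    exact min_le_right _ _

lemma lintegral_one_sub_cos_le (ξ : ℝ) :
    ∫⁻ u, ENNReal.ofReal (1 - cos (ξ * u)) ∂μ ≤
      2 * ∫⁻ u, ENNReal.ofReal (min ((ξ * u) ^ 2) 1) ∂μ := by
  rw [← lintegral_const_mul _ (by fun_prop)]
  refine lintegral_mono fun u => ?_
  rw [← ENNReal.ofReal_ofNat 2, ← ENNReal.ofReal_mul zero_le_two]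
  exact ENNReal.ofReal_le_ofReal (one_sub_cos_le_two_mul_min_sq_one _)

lemma rePsi_le_two_mul_psiU (hμ : IsLevyMeasure μ) (ξ : ℝ) : rePsi μ ξ ≤ 2 * psiU μ ξ := by
  refine ENNReal.toReal_le_of_le_ofReal (by positivity [psiU_nonneg (μ := μ) ξ]) ?_
  rw [ENNReal.ofReal_mul zero_le_two, ENNReal.ofReal_ofNat, ofReal_psiU hμ]
  exact lintegral_one_sub_cos_le ξ

lemma two_div_pi_sq_mul_psiL_le_rePsi (hμ : IsLevyMeasure μ) (ξ : ℝ) :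
    2 / π ^ 2 * psiL μ ξ ≤ rePsi μ ξ := by
  have hfin : ∫⁻ u, ENNReal.ofReal (1 - cos (ξ * u)) ∂μ ≠ ⊤ :=
    ((lintegral_one_sub_cos_le ξ).trans_lt
      (ENNReal.mul_lt_top (by norm_num) (lintegral_min_sq_one_lt_top hμ ξ))).ne
  rw [rePsi, ← ENNReal.ofReal_le_iff_le_toReal hfin, ENNReal.ofReal_mul (by positivity)]
  calc ENNReal.ofReal (2 / π ^ 2) * ENNReal.ofReal (psiL μ ξ)
      ≤ ENNReal.ofReal (2 / π ^ 2) *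
          ∫⁻ u in {u | |ξ * u| < 1}, ENNReal.ofReal ((ξ * u) ^ 2) ∂μ := by
        gcongr; exact ENNReal.ofReal_toReal_le
    _ = ∫⁻ u in {u | |ξ * u| < 1}, ENNReal.ofReal (2 / π ^ 2 * (ξ * u) ^ 2) ∂μ := by
        rw [← lintegral_const_mul _ (by fun_prop)]
        simp_rw [ENNReal.ofReal_mul (by positivity : (0 : ℝ) ≤ 2 / π ^ 2)]
    _ ≤ ∫⁻ u in {u | |ξ * u| < 1}, ENNReal.ofReal (1 - cos (ξ * u)) ∂μ :=
        setLIntegral_mono (by fun_prop) fun u hu => ENNReal.ofReal_le_ofReal <| by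
          have hπ : |ξ * u| ≤ π := (le_of_lt hu).trans (by linarith [pi_gt_three])
          linarith [cos_le_one_sub_mul_cos_sq hπ]
    _ ≤ ∫⁻ u, ENNReal.ofReal (1 - cos (ξ * u)) ∂μ := setLIntegral_le_lintegral _ _

lemma psiU_add_three_quarters_psiL_le (hμ : IsLevyMeasure μ) (ξ : ℝ) :
    psiU μ ξ + 3 / 4 * psiL μ (2 * ξ) ≤ psiU μ (2 * ξ) := by
  have hpt : ∀ u, ENNReal.ofReal (min ((ξ * u) ^ 2) 1) +
      {u | |2 * ξ * u| < 1}.indicator (fun u => ENNReal.ofReal (3 / 4 * (2 * ξ * u) ^ 2)) u ≤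
        ENNReal.ofReal (min ((2 * ξ * u) ^ 2) 1) := by
    intro u
    by_cases hu : u ∈ {u | |2 * ξ * u| < 1}
    · rw [indicator_of_mem hu, ← ENNReal.ofReal_add (by positivity) (by positivity)]
      refine ENNReal.ofReal_le_ofReal ?_
      have h2 : (2 * ξ * u) ^ 2 < 1 := by
        rw [← sq_abs]; exact pow_lt_one₀ (abs_nonneg _) hu two_ne_zero
      rw [min_eq_left (by nlinarith), min_eq_left h2.le]
      nlinarith
    · rw [indicator_of_notMem hu, add_zero]
      exact ENNReal.ofReal_le_ofReal (min_le_min_right 1 (by nlinarith [sq_nonneg (ξ * u)]))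
  rw [← ENNReal.ofReal_le_ofReal_iff (psiU_nonneg _), ofReal_psiU hμ (2 * ξ),
    ENNReal.ofReal_add (psiU_nonneg _) (mul_nonneg (by norm_num) (psiL_nonneg _)),
    ENNReal.ofReal_mul (by norm_num), ofReal_psiU hμ ξ]
  calc ∫⁻ u, ENNReal.ofReal (min ((ξ * u) ^ 2) 1) ∂μ +
        ENNReal.ofReal (3 / 4) * ENNReal.ofReal (psiL μ (2 * ξ))
      ≤ ∫⁻ u, ENNReal.ofReal (min ((ξ * u) ^ 2) 1) ∂μ + ENNReal.ofReal (3 / 4) *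
          ∫⁻ u in {u | |2 * ξ * u| < 1}, ENNReal.ofReal ((2 * ξ * u) ^ 2) ∂μ := by
        gcongr; exact ENNReal.ofReal_toReal_le
    _ = ∫⁻ u, (ENNReal.ofReal (min ((ξ * u) ^ 2) 1) + {u | |2 * ξ * u| < 1}.indicator
          (fun u => ENNReal.ofReal (3 / 4 * (2 * ξ * u) ^ 2)) u) ∂μ := by
        rw [lintegral_add_left (by fun_prop), lintegral_indicator (by measurability),
          ← lintegral_const_mul _ (by fun_prop)]
        simp_rw [ENNReal.ofReal_mul (by norm_num : (0 : ℝ) ≤ 3 / 4)]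
    _ ≤ ∫⁻ u, ENNReal.ofReal (min ((2 * ξ * u) ^ 2) 1) ∂μ := lintegral_mono hpt

lemma exists_one_lt_psiU_doubling (hμ : IsLevyMeasure μ) {β : ℝ} (hβ : 3 / 4 < β)
    (hA : ∀ ξ : ℝ, psiU μ ξ ≤ β * psiL μ ξ) :
    ∃ γ > 1, ∀ ξ, γ * psiU μ ξ ≤ psiU μ (2 * ξ) := by
  refine ⟨4 * β / (4 * β - 3), by rw [gt_iff_lt, one_lt_div (by linarith)]; linarith,
    fun ξ => ?_⟩
  rw [div_mul_eq_mul_div, div_le_iff₀ (by linarith)]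
  nlinarith [psiU_add_three_quarters_psiL_le hμ ξ, hA (2 * ξ)]

lemma exists_le_psiU (hμ : IsLevyMeasure μ) (hz : μ {u | u ≠ 0} = ⊤) (M : ℝ) :
    ∃ ξ > 0, M ≤ psiU μ ξ := by
  set A : ℕ → Set ℝ := fun n => {u | 1 ≤ |(n : ℝ) * u|}
  have hmono : Monotone A := fun m n hmn u (hu : 1 ≤ |(m : ℝ) * u|) => by
    change 1 ≤ |(n : ℝ) * u|
    rw [abs_mul, Nat.abs_cast] at hu ⊢
    exact hu.trans (by gcongr)
  have hunion : ⋃ n, A n = {u | u ≠ 0} := by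
    ext u
    simp only [A, mem_iUnion, mem_ofPred_eq]
    refine ⟨fun ⟨n, hn⟩ hu => by norm_num [hu] at hn, fun hu => ?_⟩
    obtain ⟨n, hn⟩ := exists_nat_ge |u|⁻¹
    exact ⟨n, by rw [abs_mul, Nat.abs_cast]; exact (inv_le_iff_one_le_mul₀ (abs_pos.2 hu)).1 hn⟩
  have hlim : Tendsto (μ ∘ A) atTop (𝓝 ⊤) := by
    simpa only [hunion, hz] using tendsto_measure_iUnion_atTop (μ := μ) hmono
  obtain ⟨n, hn, hn1⟩ := ((hlim.eventually_const_lt (ENNReal.ofReal_lt_top (r := M))).and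
    (eventually_ge_atTop 1)).exists
  have hAn : μ (A n) ≤ ∫⁻ u, ENNReal.ofReal (min (((n : ℝ) * u) ^ 2) 1) ∂μ := calc
    μ (A n) ≤ μ {u | 1 ≤ ENNReal.ofReal (min (((n : ℝ) * u) ^ 2) 1)} :=
      measure_mono fun u (hu : 1 ≤ |(n : ℝ) * u|) => by
        rw [mem_ofPred_eq, min_eq_right ((one_le_sq_iff_one_le_abs _).2 hu), ENNReal.ofReal_one]
    _ = 1 * μ {u | 1 ≤ ENNReal.ofReal (min (((n : ℝ) * u) ^ 2) 1)} := (one_mul _).symm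
    _ ≤ _ := mul_meas_ge_le_lintegral₀ (by fun_prop) 1
  refine ⟨n, by exact_mod_cast hn1, ?_⟩
  rw [psiU, ← ENNReal.ofReal_le_iff_le_toReal (lintegral_min_sq_one_lt_top hμ _).ne]
  exact hn.le.trans hAn

lemma exists_le_rePsi (hμ : IsLevyMeasure μ) {β : ℝ} (hβ : 0 < β)
    (hA : ∀ ξ : ℝ, psiU μ ξ ≤ β * psiL μ ξ) (hz : μ {u | u ≠ 0} = ⊤) (M : ℝ) :
    ∃ ξ > 0, M ≤ rePsi μ ξ := by
  obtain ⟨ξ, hξ, hM⟩ := exists_le_psiU hμ hz (π ^ 2 * β / 2 * M)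
  refine ⟨ξ, hξ, ?_⟩
  have hL : π ^ 2 * β / 2 * M ≤ β * psiL μ ξ := hM.trans (hA ξ)
  have hL' : π ^ 2 / 2 * M ≤ psiL μ ξ := by
    rw [mul_comm β] at hL
    exact le_of_mul_le_mul_right (by linarith) hβ
  calc M = 2 / π ^ 2 * (π ^ 2 / 2 * M) := by field_simp
    _ ≤ 2 / π ^ 2 * psiL μ ξ := by gcongr
    _ ≤ rePsi μ ξ := two_div_pi_sq_mul_psiL_le_rePsi hμ ξ

lemma not_integrable_of_measure_ne_zero_ne_top (hfin : μ {u | u ≠ 0} ≠ ⊤) (k : ℕ) {lam t : ℝ}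
    (hlam : 0 ≤ lam) (ht : 0 ≤ t) :
    ¬ Integrable fun y : ℝ => |y| ^ k * exp (-lam * t * psiU μ y) := by
  refine not_integrable_of_pos_le (exp_pos (-lam * t * (μ {u | u ≠ 0}).toReal)) fun y hy => ?_
  rw [← one_mul (exp _)]
  refine mul_le_mul (one_le_pow₀ ?_) (exp_le_exp.2 ?_) (exp_pos _).le (by positivity)
  · rw [abs_of_pos (by linarith)]; exact hy.le
  · exact mul_le_mul_of_nonpos_left (psiU_le_toReal_measure_ne_zero hfin y) (by nlinarith)

lemma exists_integral_le_of_le_psiU (hμ : IsLevyMeasure μ) {β : ℝ} (hβ : 3 / 4 < β)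
    (hA : ∀ ξ : ℝ, psiU μ ξ ≤ β * psiL μ ξ) (k : ℕ) {lam : ℝ} (hlam : 0 < lam) :
    ∃ C > 0, ∀ t > 0, ∀ ξ > 0, 1 / t ≤ 2 * psiU μ ξ →
      ∫ y, |y| ^ k * exp (-lam * t * psiU μ y) ≤ C * ξ ^ (k + 1) := by
  obtain ⟨γ, hγ, hdoub⟩ := exists_one_lt_psiU_doubling hμ hβ hA
  have hα : 0 < logb 2 γ := logb_pos one_lt_two hγ
  set c := lam / (2 * γ)
  have hc : 0 < c := by positivity
  refine ⟨exp c * (∫ s, |s| ^ k * exp (-c * |s| ^ logb 2 γ)) + 1, by positivity,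
    fun t ht ξ hξ hψ => ?_⟩
  have hscale : ∀ y, c * |y / ξ| ^ logb 2 γ - c ≤ lam * t * psiU μ y := by
    intro y
    rcases lt_or_ge |y / ξ| 1 with hy | hy
    · have : |y / ξ| ^ logb 2 γ ≤ 1 := rpow_le_one (abs_nonneg _) hy.le hα.le
      nlinarith [psiU_nonneg (μ := μ) y, mul_pos hlam ht]
    have hdouble : |y / ξ| ^ logb 2 γ * psiU μ ξ ≤ γ * psiU μ y := by
      refine (rpow_logb_mul_le_of_doubling hγ.le ?_ (fun x _ => hdoub x) hξ.le
        (psiU_nonneg ξ) hy).trans ?_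
      · exact fun a ha b hb hab => psiU_mono hμ (by rwa [abs_of_nonneg ha, abs_of_nonneg hb])
      · gcongr
        apply psiU_mono hμ
        rw [abs_div, abs_of_pos hξ, div_mul_cancel₀ _ hξ.ne', abs_abs]
    have h1 : 1 ≤ 2 * t * psiU μ ξ := by rw [div_le_iff₀ ht] at hψ; linarith
    have hgrowth : c * |y / ξ| ^ logb 2 γ ≤ lam * t * psiU μ y := calc
      c * |y / ξ| ^ logb 2 γ ≤ c * |y / ξ| ^ logb 2 γ * (2 * t * psiU μ ξ) :=
          le_mul_of_one_le_right (by positivity) h1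
      _ = lam * t / γ * (|y / ξ| ^ logb 2 γ * psiU μ ξ) := by simp only [c]; field_simp
      _ ≤ lam * t / γ * (γ * psiU μ y) := by gcongr
      _ = lam * t * psiU μ y := by field_simp
    linarith
  calc ∫ y, |y| ^ k * exp (-lam * t * psiU μ y)
      = ∫ y, |y| ^ k * exp (-(lam * t * psiU μ y)) := by simp only [neg_mul]
    _ ≤ exp c * (∫ s, |s| ^ k * exp (-c * |s| ^ logb 2 γ)) * ξ ^ (k + 1) :=
        integral_pow_abs_mul_exp_neg_le k hc hα hξ hscale
    _ ≤ _ := by gcongr; linarith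

end LevySymbols

theorem integral_bound_Ik_general (μ : Measure ℝ) (hμ : IsLevyMeasure μ)
    (β : ℝ) (hβ : 1 < β)
    (hA : ∀ ξ : ℝ, psiU μ ξ ≤ β * psiL μ ξ)
    (k : ℕ) (lam : ℝ) (hlam : 0 < lam) :
    ∃ c > 0, ∀ t ∈ Set.Ioc (0 : ℝ) 1,
      (∫ y : ℝ, |y| ^ k * Real.exp (-lam * t * psiU μ y)) ≤ c * rho μ t ^ (k + 1) := by
  obtain ⟨C, hC, hbound⟩ := exists_integral_le_of_le_psiU hμ (by linarith) hA k hlam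
  refine ⟨C, hC, fun t ⟨ht, _⟩ => ?_⟩
  by_cases hz : μ {u | u ≠ 0} = ⊤
  · obtain ⟨ξ, hξ, hψ⟩ := exists_le_rePsi hμ (by linarith) hA hz (1 / t)
    exact le_apply_csInf (f := fun ξ => C * ξ ^ (k + 1)) (by fun_prop) ⟨ξ, hξ, hψ⟩
      ⟨0, fun ξ hξ => hξ.1.le⟩
      fun ξ hξ => hbound t ht ξ hξ.1 (hξ.2.trans (rePsi_le_two_mul_psiU hμ ξ))
  · rw [integral_undef (not_integrable_of_measure_ne_zero_ne_top hz k hlam.le ht.le)]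
    have : 0 ≤ rho μ t := sInf_nonneg fun ξ hξ => hξ.1.le
    positivity

/-- Lemma 3.7: `I_k(t,λ) = ∫ |y|^k e^{−λ t ψ^U(y)} dy ≤ c ρ_t^{k+1}` for `t ∈ (0,1]`. -/
theorem integral_bound_Ik (μ : Measure ℝ) (hμ : IsLevyMeasure μ)
    (hinf : μ Set.univ = ⊤) (β : ℝ) (hβ : 1 < β)
    (hA : ∀ ξ : ℝ, psiU μ ξ ≤ β * psiL μ ξ)
    (k : ℕ) (lam : ℝ) (hlam : 0 < lam) :
    ∃ c > 0, ∀ t ∈ Set.Ioc (0 : ℝ) 1,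
      (∫ y : ℝ, |y| ^ k * Real.exp (-lam * t * psiU μ y)) ≤ c * rho μ t ^ (k + 1) :=
  integral_bound_Ik_general μ hμ β hβ hA k lam hlam
end
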